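/- If a cyclic permutation π of {1,…,n} witnesses the cycle-realization condition for a distance matrix D (namely D(i, π^s(i)) = min of the two arc sums for all i and 1 ≤ s ≤ n-1), then the weighted cycle with vertex set {1,…,n}, edges (π^t(1), π^{t+1}(1)) for t = 0,…,n-1, and edge weight D(π^t(1), π^{t+1}(1)) on edge (π^t(1), π^{t+1}(1)), realizes D: its shortest-path distance between i and j equals D(i,j) for all i,j. -/
import Mathlib

noncomputable def walkWeight {V : Type*} {G : SimpleGraph V} (w : V → V → ℝ) {u v : V}
    (p : G.Walk u v) : ℝ := (p.darts.map (fun d => w d.fst d.snd)).sum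

noncomputable def gdist {V : Type*} (G : SimpleGraph V) (w : V → V → ℝ) (u v : V) : ℝ :=
  sInf {x | ∃ p : G.Walk u v, x = walkWeight w p}

def IsDistanceMatrix {n : ℕ} (D : Fin n → Fin n → ℝ) : Prop :=
  (∀ i j, D i j = D j i) ∧ (∀ i, D i i = 0) ∧ (∀ i j, 0 ≤ D i j) ∧
    (∀ i j k, D i j ≤ D i k + D k j)

def Ematrix {n : ℕ} (i : Fin n) : Fin n → Fin n → ℝ :=
  fun j k => if (j = i ∧ k ≠ i) ∨ (j ≠ i ∧ k = i) then 1 else 0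

noncomputable def compaction {n : ℕ} (D : Fin n → Fin n → ℝ) (i : Fin n) : ℝ :=
  (1/2) * sInf {x | ∃ p r : Fin n, p ≠ i ∧ r ≠ i ∧ x = D p i + D i r - D p r}

section Aux

lemma walkWeight_nil {V : Type*} {G : SimpleGraph V} (w : V → V → ℝ) (u : V) :
    walkWeight w (SimpleGraph.Walk.nil : G.Walk u u) = 0 := by
  simp [walkWeight]

lemma walkWeight_cons {V : Type*} {G : SimpleGraph V} (w : V → V → ℝ) {u v x : V}
    (h : G.Adj u x) (p : G.Walk x v) :
    walkWeight w (SimpleGraph.Walk.cons h p) = w u x + walkWeight w p := by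
  simp [walkWeight]

lemma walkWeight_concat {V : Type*} {G : SimpleGraph V} (w : V → V → ℝ) {u v x : V}
    (p : G.Walk u v) (h : G.Adj v x) :
    walkWeight w (p.concat h) = walkWeight w p + w v x := by
  simp [walkWeight]

lemma walkWeight_copy {V : Type*} {G : SimpleGraph V} (w : V → V → ℝ) {u v u' v' : V}
    (p : G.Walk u v) (hu : u = u') (hv : v = v') :
    walkWeight w (p.copy hu hv) = walkWeight w p := by
  simp [walkWeight]

lemma walkWeight_reverse {V : Type*} {G : SimpleGraph V} (w : V → V → ℝ)
    (hw : ∀ a b, w a b = w b a) {u v : V} (p : G.Walk u v) :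
    walkWeight w p.reverse = walkWeight w p := by
  simp only [walkWeight, SimpleGraph.Walk.darts_reverse, List.map_reverse, List.sum_reverse,
    List.map_map]
  congr 1
  apply List.map_congr_left
  intro d _
  simp only [Function.comp_apply, SimpleGraph.Dart.symm_toProd]
  exact hw d.snd d.fst

end Aux

/-- If a cyclic permutation `π` witnesses the cycle-realization condition for `D`, then
the weighted cycle with edges `(x, π x)` of weight `D(x, π x)` realizes `D`. -/
theorem stmt6 {n : ℕ} (hn : 3 ≤ n) (D : Fin n → Fin n → ℝ) (hD : IsDistanceMatrix D)
    (π : Equiv.Perm (Fin n)) (hcyc : ∀ x y : Fin n, ∃ t : ℕ, (π ^ t) x = y)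
    (hcond : ∀ (i : Fin n) (s : ℕ), 1 ≤ s → s ≤ n - 1 →
      D i ((π ^ s) i) =
        min (∑ t ∈ Finset.range s, D ((π ^ t) i) ((π ^ (t + 1)) i))
            (∑ t ∈ Finset.Ico s n, D ((π ^ t) i) ((π ^ (t + 1)) i))) :
    ∀ i j : Fin n,
      gdist (SimpleGraph.fromRel (fun u v : Fin n => v = π u))
        (fun u v => if v = π u then D u (π u) else if u = π v then D v (π v) else 0)
        i j = D i j := by
  obtain ⟨hsymm, hdiag, hnonneg, htri⟩ := hD
  set G := SimpleGraph.fromRel (fun u v : Fin n => v = π u) with hG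
  set w : Fin n → Fin n → ℝ :=
    fun u v => if v = π u then D u (π u) else if u = π v then D v (π v) else 0 with hw
  have hnontriv : Nontrivial (Fin n) := Fin.nontrivial_iff_two_le.mpr (by omega)
  -- no fixed points
  have hfix : ∀ x : Fin n, π x ≠ x := by
    intro x hx
    obtain ⟨y, hy⟩ := exists_ne x
    obtain ⟨t, ht⟩ := hcyc x y
    have hall : ∀ t : ℕ, (π ^ t) x = x := by
      intro t
      induction t with
      | zero => simp
      | succ k ih => rw [pow_succ, Equiv.Perm.mul_apply, hx, ih]
    exact hy (ht ▸ hall t)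
  -- w is symmetric
  have hwsymm : ∀ a b, w a b = w b a := by
    intro a b
    simp only [hw]
    by_cases h1 : b = π a <;> by_cases h2 : a = π b
    · rw [if_pos h1, if_pos h2, ← h1, ← h2]
      exact hsymm a b
    · rw [if_pos h1, if_neg h2, if_pos h1]
    · rw [if_neg h1, if_pos h2, if_pos h2]
    · rw [if_neg h1, if_neg h2, if_neg h2, if_neg h1]
  -- edge weights equal D
  have hwadj : ∀ a b : Fin n, G.Adj a b → w a b = D a b := by
    intro a b hab
    rw [hG, SimpleGraph.fromRel_adj] at hab
    by_cases hb : b = π a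
    · simp only [hw, if_pos hb]
      rw [← hb]
    · have ha : a = π b := hab.2.resolve_left hb
      simp only [hw, if_neg hb, if_pos ha]
      rw [← ha, hsymm]
  -- π is an n-cycle, so π ^ n = 1
  have hcycle : π.IsCycle := by
    refine ⟨⟨0, by omega⟩, hfix _, ?_⟩
    intro y _
    obtain ⟨t, ht⟩ := hcyc ⟨0, by omega⟩ y
    exact ⟨(t : ℤ), by rw [zpow_natCast]; exact ht⟩
  have hsupp : π.support = Finset.univ := by
    ext y
    simp [Equiv.Perm.mem_support, hfix y]
  have horder : orderOf π = n := by
    rw [hcycle.orderOf, hsupp, Finset.card_univ, Fintype.card_fin]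
  -- step adjacency
  have hadjstep : ∀ x : Fin n, G.Adj x (π x) := by
    intro x
    rw [hG, SimpleGraph.fromRel_adj]
    exact ⟨fun h => hfix x h.symm, Or.inl rfl⟩
  have hpp : ∀ (a b : ℕ) (x : Fin n), (π ^ a) ((π ^ b) x) = (π ^ (b + a)) x := by
    intro a b x
    rw [add_comm, pow_add, Equiv.Perm.mul_apply]
  -- forward walks realize the arc sums
  have hwalk : ∀ (s : ℕ) (i : Fin n), ∃ p : G.Walk i ((π ^ s) i),
      walkWeight w p = ∑ t ∈ Finset.range s, D ((π ^ t) i) ((π ^ (t + 1)) i) := by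
    intro s i
    induction s with
    | zero =>
      exact ⟨SimpleGraph.Walk.nil.copy rfl (by simp), by
        rw [walkWeight_copy, walkWeight_nil, Finset.sum_range_zero]⟩
    | succ k ih =>
      obtain ⟨p, hp⟩ := ih
      have hstep : G.Adj ((π ^ k) i) ((π ^ (k + 1)) i) := by
        have h := hadjstep ((π ^ k) i)
        rwa [show π ((π ^ k) i) = (π ^ (k + 1)) i from by
          rw [pow_succ', Equiv.Perm.mul_apply]] at h
      refine ⟨p.concat hstep, ?_⟩
      rw [walkWeight_concat, hp, Finset.sum_range_succ, hwadj _ _ hstep]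
  -- lower bound: every walk weight is at least D
  have hlb : ∀ (u v : Fin n) (p : G.Walk u v), D u v ≤ walkWeight w p := by
    intro u v p
    induction p with
    | nil => rw [walkWeight_nil, hdiag]
    | @cons a b c h q ih =>
      rw [walkWeight_cons, hwadj _ _ h]
      calc D a c ≤ D a b + D b c := htri a c b
        _ ≤ D a b + walkWeight w q := by linarith
  intro i j
  obtain ⟨t, ht⟩ := hcyc i j
  have hpow : π ^ (t % n) = π ^ t := by
    have h := pow_mod_orderOf π t
    rwa [horder] at h
  set s := t % n with hs
  have hsn : s < n := Nat.mod_lt _ (by omega)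
  have hsij : (π ^ s) i = j := by rw [hpow, ht]
  set S : Set ℝ := {x | ∃ p : G.Walk i j, x = walkWeight w p} with hS
  have hlbS : ∀ x ∈ S, D i j ≤ x := by
    rintro x ⟨p, rfl⟩
    exact hlb i j p
  have hmem : D i j ∈ S := by
    by_cases hs0 : s = 0
    · have hij : i = j := by rw [← hsij, hs0, pow_zero]; rfl
      subst hij
      exact ⟨SimpleGraph.Walk.nil, by rw [walkWeight_nil, hdiag]⟩
    · have hs1 : 1 ≤ s := by omega
      have hs2 : s ≤ n - 1 := by omega
      have hmin := hcond i s hs1 hs2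
      rw [hsij] at hmin
      -- forward walk
      obtain ⟨p1, hp1⟩ := hwalk s i
      -- backward walk
      obtain ⟨p2, hp2⟩ := hwalk (n - s) ((π ^ s) i)
      have hpn : π ^ n = 1 := by
        have h := pow_orderOf_eq_one π
        rwa [horder] at h
      have hend : (π ^ (n - s)) ((π ^ s) i) = i := by
        rw [hpp, Nat.add_sub_cancel' (le_of_lt hsn), hpn]
        rfl
      have hp2sum : walkWeight w p2 = ∑ t ∈ Finset.Ico s n, D ((π ^ t) i) ((π ^ (t + 1)) i) := by
        rw [hp2, Finset.sum_Ico_eq_sum_range]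
        apply Finset.sum_congr rfl
        intro k _
        rw [hpp, hpp, ← Nat.add_assoc]
      -- assemble walks i → j from both
      have hA : (∑ t ∈ Finset.range s, D ((π ^ t) i) ((π ^ (t + 1)) i)) ∈ S := by
        exact ⟨p1.copy rfl hsij, by rw [walkWeight_copy, hp1]⟩
      have hB : (∑ t ∈ Finset.Ico s n, D ((π ^ t) i) ((π ^ (t + 1)) i)) ∈ S := by
        refine ⟨((p2.copy rfl hend).reverse.copy rfl hsij), ?_⟩
        rw [walkWeight_copy, walkWeight_reverse w hwsymm, walkWeight_copy, hp2sum]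
      rw [hmin]
      rcases min_cases (∑ t ∈ Finset.range s, D ((π ^ t) i) ((π ^ (t + 1)) i))
          (∑ t ∈ Finset.Ico s n, D ((π ^ t) i) ((π ^ (t + 1)) i)) with ⟨h, _⟩ | ⟨h, _⟩ <;>
        rw [h]
      · exact hA
      · exact hB
  show sInf S = D i j
  apply le_antisymm
  · exact csInf_le ⟨D i j, hlbS⟩ hmem
  · exact le_csInf ⟨D i j, hmem⟩ hlbS
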